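/- Let m be a positive integer and x a real number. Define polynomials Q_n ∈ ℝ[z] by Q_0 = 1, Q_1 = z − (1+x), and Q_n = (z − (1 + (2n−1)x + (n−1)m))·Q_{n−1} − (n−1)^2·x·(x+m)·Q_{n−2} for n ≥ 2. Let L : ℝ[z] → ℝ be the unique linear functional with L(z^n) = 𝓕_m(n,x) for all n ≥ 0. Then L(Q_i · Q_j) = 0 whenever i ≠ j; that is, the Tanny-Dowling polynomials 𝓕_m(n,x) are the moments of the orthogonal polynomial family (Q_n). -/

import Mathlib

/-!
Write `B_l = ∏_{i<l} (z - (m i + 1))`. Newton's forward-difference formula for `i ↦ (m i + 1)^n`,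
read off at the nodes `z = m j + 1`, gives `z^n = ∑_k W_m(n,k) B_k`; comparing with the definition
of `𝓕_m(n,x)` yields `L(B_l) = l! x^l`. Multiplying the three-term recurrence by `B_l` and using
`B_l (z - c) = B_{l+1} + (m l + 1 - c) B_l` then gives `L(B_l Q_n) = l! (l)_n x^l (x+m)^n`, with
`(l)_n = l (l-1) ⋯ (l-n+1)` the falling factorial. It vanishes for `l < n`, so `Q_n` is orthogonal
to every polynomial of degree `< n`, in particular to `Q_i` for `i < n`.
-/

/-- Whitney numbers of the second kind:
`W_m(n,k) = (1/(m^k k!)) ∑_{i=0}^k (−1)^{k−i} C(k,i) (mi+1)^n`. -/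
noncomputable def whitney2 (m n k : ℕ) : ℝ :=
  (1 / ((m : ℝ) ^ k * k.factorial)) *
    ∑ i ∈ Finset.range (k + 1), (-1 : ℝ) ^ (k - i) * (k.choose i) * ((m : ℝ) * i + 1) ^ n

/-- Tanny–Dowling polynomials `𝓕_m(n,x) = ∑_{k=0}^n k!·W_m(n,k)·x^k`. -/
noncomputable def tannyDowling (m n : ℕ) (x : ℝ) : ℝ :=
  ∑ k ∈ Finset.range (n + 1), (k.factorial : ℝ) * whitney2 m n k * x ^ k

/-- `Q_0 = 1`, `Q_1 = z − (1+x)`,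
`Q_n = (z − (1 + (2n−1)x + (n−1)m))·Q_{n−1} − (n−1)²·x·(x+m)·Q_{n−2}` for `n ≥ 2`. -/
noncomputable def tannyDowlingOP (m : ℕ) (x : ℝ) : ℕ → Polynomial ℝ
  | 0 => 1
  | 1 => Polynomial.X - Polynomial.C (1 + x)
  | (n + 2) =>
      (Polynomial.X - Polynomial.C (1 + (2 * ((n : ℝ) + 2) - 1) * x + ((n : ℝ) + 1) * m)) *
          tannyDowlingOP m x (n + 1) -
        Polynomial.C (((n : ℝ) + 1) ^ 2 * x * (x + m)) * tannyDowlingOP m x n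

open Polynomial Finset fwdDiff

lemma descPochhammer_eval_add_one {R : Type*} [CommRing R] (n : ℕ) (r : R) :
    (descPochhammer R (n + 1)).eval (r + 1) = (r + 1) * (descPochhammer R n).eval r := by
  simp [descPochhammer_succ_left]

lemma LinearMap.map_C_mul {R : Type*} [CommSemiring R] (L : R[X] →ₗ[R] R) (c : R) (p : R[X]) :
    L (C c * p) = c * L p := by
  rw [← smul_eq_C_mul, map_smul, smul_eq_mul]

lemma Polynomial.Sequence.map_mul_eq_zero_of_natDegree_le {R M : Type*} [CommRing R]
    [AddCommGroup M] [Module R M] (S : Sequence R) {d : ℕ}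
    (hS : ∀ i ≤ d, IsUnit (S i).leadingCoeff) (L : R[X] →ₗ[R] M) (f : R[X])
    (h : ∀ i ≤ d, L (S i * f) = 0) {q : R[X]} (hq : q.natDegree ≤ d) :
    L (q * f) = 0 := by
  have hspan : Submodule.span R (S '' Set.Iic d) ≤ LinearMap.ker (L ∘ₗ LinearMap.mulRight R f) :=
    Submodule.span_le.2 <| by rintro _ ⟨i, hi, rfl⟩; exact h i hi
  have hq' : q ∈ Submodule.span R (S '' Set.Iic d) := by
    rw [S.span_degreeLE hS]
    exact mem_degreeLE.2 (degree_le_of_natDegree_le hq)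
  exact hspan hq'

noncomputable def whitneyBasis (m : ℕ) : Polynomial.Sequence ℝ where
  elems' l := ∏ i ∈ range l, (X - C ((m : ℝ) * i + 1))
  degree_eq' l := by
    rw [degree_eq_natDegree (monic_prod_of_monic _ _ fun _ _ => monic_X_sub_C _).ne_zero,
      natDegree_prod_of_monic _ _ fun _ _ => monic_X_sub_C _]
    simp only [natDegree_X_sub_C, sum_const, card_range, smul_eq_mul, mul_one]

lemma whitneyBasis_apply (m l : ℕ) :
    whitneyBasis m l = ∏ i ∈ range l, (X - C ((m : ℝ) * i + 1)) := rfl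

lemma monic_whitneyBasis (m l : ℕ) : (whitneyBasis m l).Monic := by
  rw [whitneyBasis_apply]
  exact monic_prod_of_monic _ _ fun _ _ => monic_X_sub_C _

lemma whitneyBasis_mul_X_sub_C (m l : ℕ) (c : ℝ) :
    whitneyBasis m l * (X - C c) =
      whitneyBasis m (l + 1) + C ((m : ℝ) * l + 1 - c) * whitneyBasis m l := by
  rw [whitneyBasis_apply, whitneyBasis_apply, prod_range_succ, C_sub]
  ring

lemma eval_whitneyBasis (m j k : ℕ) :
    (whitneyBasis m k).eval ((m : ℝ) * j + 1) = m ^ k * (descPochhammer ℝ k).eval (j : ℝ) := by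
  have hfactor (i : ℕ) : (X - C ((m : ℝ) * i + 1)).eval ((m : ℝ) * j + 1) = m * ((j : ℝ) - i) := by
    simp only [eval_sub, eval_X, eval_C]
    ring
  rw [whitneyBasis_apply, eval_prod, prod_congr rfl fun i _ => hfactor i, prod_mul_distrib,
    prod_const, card_range, descPochhammer_eval_eq_prod_range]

section newton

variable {m : ℕ}

lemma pow_mul_factorial_mul_whitney2_eq_fwdDiff_iter (hm : m ≠ 0) (n k : ℕ) :
    (m : ℝ) ^ k * k.factorial * whitney2 m n k =
      (Δ_[1])^[k] (fun i : ℕ => ((m : ℝ) * i + 1) ^ n) 0 := by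
  have hmk : (m : ℝ) ^ k * k.factorial ≠ 0 := by positivity
  rw [fwdDiff_iter_eq_sum_shift, whitney2, ← mul_assoc, mul_one_div_cancel hmk, one_mul]
  refine sum_congr rfl fun i _ => ?_
  simp only [zsmul_eq_mul, zero_add, smul_eq_mul, mul_one]
  push_cast
  ring

lemma X_pow_eq_sum_whitney2_mul_whitneyBasis (hm : m ≠ 0) (n : ℕ) :
    (X : ℝ[X]) ^ n = ∑ k ∈ range (n + 1), C (whitney2 m n k) * whitneyBasis m k := by
  set f : ℕ → ℝ := fun i => ((m : ℝ) * i + 1) ^ n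
  have hnodes : Function.Injective fun j : Fin (n + 1) => (m : ℝ) * (j : ℕ) + 1 := by
    intro a b hab
    have : ((a : ℕ) : ℝ) = (b : ℕ) := mul_left_cancel₀ (Nat.cast_ne_zero.2 hm) (by simpa using hab)
    exact Fin.ext (by exact_mod_cast this)
  refine eq_of_natDegree_lt_card_of_eval_eq _ _ hnodes (fun j => ?_) ?_
  · have hj : (j : ℕ) ≤ n := Nat.lt_succ_iff.1 j.isLt
    calc (X ^ n).eval ((m : ℝ) * (j : ℕ) + 1) = f j := by simp [f]
      _ = ∑ k ∈ range ((j : ℕ) + 1), ((j : ℕ).choose k : ℝ) * (Δ_[1])^[k] f 0 := by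
        simpa using shift_eq_sum_fwdDiff_iter 1 f (j : ℕ) 0
      _ = ∑ k ∈ range (n + 1), ((j : ℕ).choose k : ℝ) * (Δ_[1])^[k] f 0 := by
        refine sum_subset (range_subset_range.2 (by omega)) fun k _ hk => ?_
        rw [Nat.choose_eq_zero_of_lt (by simpa using hk), Nat.cast_zero, zero_mul]
      _ = _ := by
        rw [eval_finsetSum]
        refine sum_congr rfl fun k _ => ?_
        rw [eval_C_mul, eval_whitneyBasis, descPochhammer_eval_eq_descFactorial,
          Nat.descFactorial_eq_factorial_mul_choose,
          ← pow_mul_factorial_mul_whitney2_eq_fwdDiff_iter hm]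
        push_cast
        ring
  · rw [Fintype.card_fin]
    refine max_lt (by simp) (Nat.lt_succ_of_le (natDegree_sum_le_of_forall_le _ _ fun k hk => ?_))
    exact (natDegree_C_mul_le _ _).trans
      (((whitneyBasis m).natDegree_eq k).trans_le (Nat.lt_succ_iff.1 (mem_range.1 hk)))

lemma whitney2_self (hm : m ≠ 0) (n : ℕ) : whitney2 m n n = 1 := by
  have hcoeff := congrArg (coeff · n) (X_pow_eq_sum_whitney2_mul_whitneyBasis hm n)
  have hlead : (whitneyBasis m n).coeff n = 1 := by
    simpa using (monic_whitneyBasis m n).coeff_natDegree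
  simp only [coeff_X_pow_self, finsetSum_coeff, coeff_C_mul] at hcoeff
  rw [sum_range_succ, sum_eq_zero fun k hk => by
      rw [coeff_eq_zero_of_natDegree_lt (by simpa using hk), mul_zero], hlead] at hcoeff
  simpa using hcoeff.symm

end newton

section moments

variable {m : ℕ} {x : ℝ} {L : ℝ[X] →ₗ[ℝ] ℝ}

lemma map_whitneyBasis (hm : m ≠ 0) (hL : ∀ n : ℕ, L (X ^ n) = tannyDowling m n x) (l : ℕ) :
    L (whitneyBasis m l) = l.factorial * x ^ l := by
  induction l using Nat.strong_induction_on with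
  | _ l ih =>
    have hl := hL l
    rw [X_pow_eq_sum_whitney2_mul_whitneyBasis hm, map_sum, tannyDowling, sum_range_succ,
      sum_range_succ, whitney2_self hm] at hl
    simp only [L.map_C_mul, one_mul] at hl
    rw [sum_congr rfl fun k hk => show whitney2 m l k * L (whitneyBasis m k) =
      k.factorial * whitney2 m l k * x ^ k by rw [ih k (mem_range.1 hk)]; ring] at hl
    simpa using hl

lemma map_whitneyBasis_mul_tannyDowlingOP (hm : m ≠ 0)
    (hL : ∀ n : ℕ, L (X ^ n) = tannyDowling m n x) (n l : ℕ) :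
    L (whitneyBasis m l * tannyDowlingOP m x n) =
      l.factorial * (descPochhammer ℝ n).eval (l : ℝ) * x ^ l * (x + m) ^ n := by
  induction n using Nat.twoStepInduction generalizing l with
  | zero => simp [tannyDowlingOP, map_whitneyBasis hm hL]
  | one =>
    rw [tannyDowlingOP, whitneyBasis_mul_X_sub_C, map_add, L.map_C_mul, map_whitneyBasis hm hL,
      map_whitneyBasis hm hL]
    push_cast [Nat.factorial_succ]
    simp only [descPochhammer_one, eval_X, pow_one]
    ring
  | more n ih₀ ih₁ =>
    rw [tannyDowlingOP, mul_sub, ← mul_assoc, whitneyBasis_mul_X_sub_C, add_mul, mul_left_comm,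
      mul_assoc, map_sub, map_add, L.map_C_mul, L.map_C_mul, ih₁, ih₁, ih₀, Nat.cast_succ,
      descPochhammer_eval_add_one]
    simp only [descPochhammer_succ_eval]
    push_cast [Nat.factorial_succ]
    ring

end moments

lemma natDegree_tannyDowlingOP_le (m : ℕ) (x : ℝ) (n : ℕ) :
    (tannyDowlingOP m x n).natDegree ≤ n := by
  induction n using Nat.twoStepInduction with
  | zero => simp [tannyDowlingOP]
  | one => exact (natDegree_X_sub_C _).le
  | more n ih₀ ih₁ =>
    rw [tannyDowlingOP]
    refine (natDegree_sub_le_of_le (natDegree_mul_le_of_le (natDegree_X_sub_C _).le ih₁)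
      ((natDegree_C_mul_le _ _).trans ih₀)).trans ?_
    omega

/-- The Tanny–Dowling polynomials `𝓕_m(n,x)` are the moments of the orthogonal family `Q_n`. -/
theorem tannyDowling_moments (m : ℕ) (hm : 0 < m) (x : ℝ)
    (L : Polynomial ℝ →ₗ[ℝ] ℝ)
    (hL : ∀ n : ℕ, L (Polynomial.X ^ n) = tannyDowling m n x) :
    ∀ i j : ℕ, i ≠ j → L (tannyDowlingOP m x i * tannyDowlingOP m x j) = 0 := by
  intro i j hij
  wlog hlt : i < j generalizing i j
  · rw [mul_comm]
    exact this j i hij.symm (by omega)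
  refine (whitneyBasis m).map_mul_eq_zero_of_natDegree_le
    (fun l _ => by rw [(monic_whitneyBasis m l).leadingCoeff]; exact isUnit_one) L _
    (fun l hl => ?_) (natDegree_tannyDowlingOP_le m x i)
  rw [map_whitneyBasis_mul_tannyDowlingOP hm.ne' hL, descPochhammer_eval_coe_nat_of_lt (by omega)]
  ring
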